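/- arXiv:math/0612433 — 2 statements merged into one kernel-verified Lean document; each statement's English description precedes it below -/
import Mathlib

section
/- Let t > 0, s > 0, and suppose there exists C ≥ 0 such that for every f ∈ L¹(ℂⁿ, dv_s) the function w ↦ e^{t⟨z,w⟩} f(w) is dv_t-integrable for a.e. z ∈ ℂⁿ and ∫_{ℂⁿ} |S_t f| dv_s ≤ C ∫_{ℂⁿ} |f| dv_s, where S_t f(z) = ∫_{ℂⁿ} e^{t⟨z,w⟩} f(w) dv_t(w). Then t = 2s. -/
open MeasureTheory

/-- `|z|² = |z₁|² + ⋯ + |zₙ|²` on `ℂⁿ`. -/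
noncomputable def nsq {n : ℕ} (z : Fin n → ℂ) : ℝ := ∑ i, Complex.normSq (z i)

/-- `⟨z,w⟩ = z₁·conj w₁ + ⋯ + zₙ·conj wₙ` on `ℂⁿ`. -/
noncomputable def herm {n : ℕ} (z w : Fin n → ℂ) : ℂ := ∑ i, z i * (starRingEnd ℂ) (w i)

/-- The Gaussian probability measure `dv_t(z) = (t/π)^n e^{-t|z|²} dv(z)` on `ℂⁿ`. -/
noncomputable def gaussMeasure (n : ℕ) (t : ℝ) : Measure (Fin n → ℂ) :=
  volume.withDensity fun z => ENNReal.ofReal ((t / Real.pi) ^ n * Real.exp (-t * nsq z))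

/-!
Test the inequality on `f w = exp (q w₀ + conj w₀)` with `q` real. Every integral that occurs is a
Gaussian integral `∫ exp (∑ cᵢ wᵢ + dᵢ conj wᵢ) dv_β(w) = exp (∑ cᵢ dᵢ / β)`, which gives
`S_t f z = exp (q z₀ + q / t)`, `‖S_t f‖_{L¹(dv_s)} = exp (q / t + q² / 4s)` and
`‖f‖_{L¹(dv_s)} = exp ((q + 1)² / 4s)`. The bound then reads `exp (q (1/t - 1/2s)) ≤ C exp (1/4s)`
for every real `q`, which forces `1/t = 1/2s`.
-/

open Complex
open scoped Real ComplexConjugate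

section OneDim

variable {β : ℝ}

-- The `+ 0` puts both factors in the shape of `integral_cexp_quadratic`.
lemma cexp_mul_add_mul_conj_mul_gaussian (β : ℝ) (a b u : ℂ) :
    cexp (a * u + b * conj u) * ((β / π * rexp (-β * normSq u) : ℝ) : ℂ) =
      (β / π : ℝ) * (cexp (-β * u.re ^ 2 + (a + b) * u.re + 0) *
        cexp (-β * u.im ^ 2 + I * (a - b) * u.im + 0)) := by
  conv_lhs => rw [← re_add_im u]
  simp only [map_add, map_mul, conj_ofReal, conj_I, normSq_add_mul_I, ofReal_mul, ofReal_exp]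
  rw [mul_left_comm, ← exp_add, ← exp_add]
  congr 2
  push_cast
  ring_nf

lemma integrable_cexp_mul_add_mul_conj_mul_gaussian (hβ : 0 < β) (a b : ℂ) :
    Integrable fun u : ℂ =>
      cexp (a * u + b * conj u) * ((β / π * rexp (-β * normSq u) : ℝ) : ℂ) := by
  have hβ' : 0 < (β : ℂ).re := by simpa
  simp_rw [cexp_mul_add_mul_conj_mul_gaussian]
  refine Integrable.const_mul ?_ _
  exact (volume_preserving_equiv_real_prod.integrable_comp_emb
    measurableEquivRealProd.measurableEmbedding).2
    ((integrable_cexp_quadratic hβ' _ _).mul_prod (integrable_cexp_quadratic hβ' _ _))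

lemma integral_cexp_mul_add_mul_conj_mul_gaussian (hβ : 0 < β) (a b : ℂ) :
    ∫ u : ℂ, cexp (a * u + b * conj u) * ((β / π * rexp (-β * normSq u) : ℝ) : ℂ) =
      cexp (a * b / β) := by
  have hβ' : (-β : ℂ).re < 0 := by simpa
  have hβ0 : (β : ℂ) ≠ 0 := by exact_mod_cast hβ.ne'
  have hπ0 : (π : ℂ) ≠ 0 := by exact_mod_cast Real.pi_ne_zero
  set F₁ : ℝ → ℂ := fun x => cexp (-β * x ^ 2 + (a + b) * x + 0)
  set F₂ : ℝ → ℂ := fun y => cexp (-β * y ^ 2 + I * (a - b) * y + 0)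
  calc _ = (β / π : ℝ) * ∫ u : ℂ, F₁ u.re * F₂ u.im := by
        simp_rw [cexp_mul_add_mul_conj_mul_gaussian]
        exact integral_const_mul _ _
    _ = (β / π : ℝ) * ∫ p : ℝ × ℝ, F₁ p.1 * F₂ p.2 := by
        congr 1
        exact volume_preserving_equiv_real_prod.integral_comp'
          (g := fun p => F₁ p.1 * F₂ p.2)
    _ = (β / π : ℝ) * ((∫ x, F₁ x) * ∫ y, F₂ y) := by
        rw [Measure.volume_eq_prod, integral_prod_mul]
    _ = cexp (a * b / β) := by
        rw [integral_cexp_quadratic hβ', integral_cexp_quadratic hβ', neg_neg, mul_mul_mul_comm,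
          ← cpow_add _ _ (div_ne_zero hπ0 hβ0), add_halves, cpow_one, ← exp_add]
        push_cast
        rw [← mul_assoc, div_mul_div_cancel₀ hπ0, div_self hβ0, one_mul]
        congr 1
        field_simp
        linear_combination (a - b) ^ 2 * I_sq

end OneDim

section Gaussian

variable {n : ℕ} {β : ℝ}

noncomputable def gaussDensity (n : ℕ) (β : ℝ) (w : Fin n → ℂ) : ℝ :=
  (β / π) ^ n * rexp (-β * nsq w)

lemma gaussMeasure_eq_withDensity (n : ℕ) (β : ℝ) :
    gaussMeasure n β = volume.withDensity fun w => ((gaussDensity n β w).toNNReal : ENNReal) :=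
  rfl

lemma measurable_gaussDensity_toNNReal (n : ℕ) (β : ℝ) :
    Measurable fun w : Fin n → ℂ => (gaussDensity n β w).toNNReal := by
  unfold gaussDensity nsq
  fun_prop

lemma toNNReal_gaussDensity_smul (hβ : 0 ≤ β) (g : (Fin n → ℂ) → ℂ) (w : Fin n → ℂ) :
    (gaussDensity n β w).toNNReal • g w = g w * gaussDensity n β w := by
  rw [NNReal.smul_def, Real.coe_toNNReal _ (by unfold gaussDensity; positivity), real_smul,
    mul_comm]

lemma integrable_gaussMeasure_iff (hβ : 0 ≤ β) {g : (Fin n → ℂ) → ℂ} :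
    Integrable g (gaussMeasure n β) ↔ Integrable fun w => g w * gaussDensity n β w := by
  simp_rw [gaussMeasure_eq_withDensity, integrable_withDensity_iff_integrable_smul
    (measurable_gaussDensity_toNNReal n β), toNNReal_gaussDensity_smul hβ]

lemma integral_gaussMeasure (hβ : 0 ≤ β) (g : (Fin n → ℂ) → ℂ) :
    ∫ w, g w ∂gaussMeasure n β = ∫ w, g w * gaussDensity n β w := by
  simp_rw [gaussMeasure_eq_withDensity, integral_withDensity_eq_integral_smul
    (measurable_gaussDensity_toNNReal n β), toNNReal_gaussDensity_smul hβ]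

lemma cexp_sum_mul_gaussDensity_eq_prod (β : ℝ) (c d w : Fin n → ℂ) :
    cexp (∑ i, (c i * w i + d i * conj (w i))) * gaussDensity n β w =
      ∏ i, cexp (c i * w i + d i * conj (w i)) *
        ((β / π * rexp (-β * normSq (w i)) : ℝ) : ℂ) := by
  rw [Finset.prod_mul_distrib, ← exp_sum, gaussDensity, nsq, Finset.mul_sum, Real.exp_sum]
  push_cast
  rw [Finset.prod_mul_distrib, Finset.prod_const, Finset.card_univ, Fintype.card_fin]

lemma integrable_cexp_sum_gaussMeasure (hβ : 0 < β) (c d : Fin n → ℂ) :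
    Integrable (fun w => cexp (∑ i, (c i * w i + d i * conj (w i)))) (gaussMeasure n β) := by
  rw [integrable_gaussMeasure_iff hβ.le]
  simp_rw [cexp_sum_mul_gaussDensity_eq_prod]
  exact Integrable.fintype_prod (f := fun i u => cexp (c i * u + d i * conj u) *
    ((β / π * rexp (-β * normSq u) : ℝ) : ℂ))
    fun i => integrable_cexp_mul_add_mul_conj_mul_gaussian hβ (c i) (d i)

lemma integral_cexp_sum_gaussMeasure (hβ : 0 < β) (c d : Fin n → ℂ) :
    ∫ w, cexp (∑ i, (c i * w i + d i * conj (w i))) ∂gaussMeasure n β =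
      cexp (∑ i, c i * d i / β) := by
  simp_rw [integral_gaussMeasure hβ.le, cexp_sum_mul_gaussDensity_eq_prod, exp_sum]
  rw [integral_fintype_prod_volume_eq_prod (fun i u => cexp (c i * u + d i * conj u) *
    ((β / π * rexp (-β * normSq u) : ℝ) : ℂ))]
  exact Finset.prod_congr rfl fun i _ =>
    integral_cexp_mul_add_mul_conj_mul_gaussian hβ (c i) (d i)

end Gaussian

lemma sum_pi_single_mul {ι R : Type*} [Fintype ι] [DecidableEq ι] [NonUnitalNonAssocSemiring R]
    (k : ι) (a : R) (v : ι → R) : ∑ i, (Pi.single k a : ι → R) i * v i = a * v k := by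
  simp [Pi.single_apply]

section Coordinate

variable {n : ℕ} {β s t : ℝ}

lemma integrable_cexp_coord_gaussMeasure (hβ : 0 < β) (k : Fin n) (a b : ℂ) :
    Integrable (fun w : Fin n → ℂ => cexp (a * w k + b * conj (w k))) (gaussMeasure n β) := by
  simpa only [Finset.sum_add_distrib, sum_pi_single_mul] using
    integrable_cexp_sum_gaussMeasure hβ (Pi.single k a) (Pi.single k b)

lemma integral_cexp_coord_gaussMeasure (hβ : 0 < β) (k : Fin n) (a b : ℂ) :
    ∫ w, cexp (a * w k + b * conj (w k)) ∂gaussMeasure n β = cexp (a * b / β) := by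
  simpa only [Finset.sum_add_distrib, ← Finset.sum_div, sum_pi_single_mul,
    Pi.single_eq_same] using
    integral_cexp_sum_gaussMeasure hβ (Pi.single k a) (Pi.single k b)

lemma integral_cexp_herm_mul_cexp_coord_gaussMeasure (hβ : 0 < β) (k : Fin n) (z : Fin n → ℂ)
    (a b : ℂ) :
    ∫ w, cexp (β * herm z w) * cexp (a * w k + b * conj (w k)) ∂gaussMeasure n β =
      cexp (a * z k + a * b / β) := by
  have hβ0 : (β : ℂ) ≠ 0 := by exact_mod_cast hβ.ne'
  have h (w : Fin n → ℂ) : cexp (β * herm z w) * cexp (a * w k + b * conj (w k)) =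
      cexp (∑ i, ((Pi.single k a : Fin n → ℂ) i * w i +
        (β * z i + (Pi.single k b : Fin n → ℂ) i) * conj (w i))) := by
    simp only [← exp_add, herm, add_mul, Finset.sum_add_distrib, sum_pi_single_mul, Finset.mul_sum,
      mul_assoc]
    congr 1
    ring
  simp_rw [h, integral_cexp_sum_gaussMeasure hβ, ← Finset.sum_div, sum_pi_single_mul,
    Pi.single_eq_same]
  congr 1
  field_simp

lemma lintegral_exp_mul_re_gaussMeasure (hβ : 0 < β) (k : Fin n) (a : ℝ) :
    ∫⁻ z, ENNReal.ofReal (rexp (a * (z k).re)) ∂gaussMeasure n β =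
      ENNReal.ofReal (rexp (a ^ 2 / (4 * β))) := by
  have hF (z : Fin n → ℂ) :
      cexp ((a / 2 : ℝ) * z k + (a / 2 : ℝ) * conj (z k)) = rexp (a * (z k).re) := by
    rw [← mul_add, add_conj, ofReal_exp]
    push_cast
    ring_nf
  have hint := integrable_cexp_coord_gaussMeasure hβ k (a / 2 : ℝ) (a / 2 : ℝ)
  have hval := integral_cexp_coord_gaussMeasure hβ k (a / 2 : ℝ) (a / 2 : ℝ)
  simp_rw [hF] at hint hval
  have hintegral : ∫ z, rexp (a * (z k).re) ∂gaussMeasure n β = rexp (a ^ 2 / (4 * β)) := by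
    apply ofReal_injective
    rw [← integral_complex_ofReal, hval, ofReal_exp]
    push_cast
    ring_nf
  rw [← hintegral, ofReal_integral_eq_lintegral_ofReal
    (by simpa only [RCLike.re_to_complex, ofReal_re] using hint.re)
    (ae_of_all _ fun z => (Real.exp_pos _).le)]

lemma lintegral_norm_cexp_coord_gaussMeasure (hs : 0 < s) (k : Fin n) (q p : ℝ) :
    ∫⁻ z, ENNReal.ofReal ‖cexp (q * z k + p * conj (z k))‖ ∂gaussMeasure n s =
      ENNReal.ofReal (rexp ((q + p) ^ 2 / (4 * s))) := by
  rw [← lintegral_exp_mul_re_gaussMeasure hs k]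
  congr! 3 with z
  simp only [norm_exp, add_re, re_ofReal_mul, conj_re]
  ring_nf

lemma lintegral_norm_integral_cexp_herm_mul_cexp_coord (ht : 0 < t) (hs : 0 < s) (k : Fin n)
    (q p : ℝ) :
    ∫⁻ z, ENNReal.ofReal
        ‖∫ w, cexp (t * herm z w) * cexp (q * w k + p * conj (w k)) ∂gaussMeasure n t‖
        ∂gaussMeasure n s =
      ENNReal.ofReal (rexp (q * p / t + q ^ 2 / (4 * s))) := by
  simp_rw [integral_cexp_herm_mul_cexp_coord_gaussMeasure ht, norm_exp]
  rw [Real.exp_add, ENNReal.ofReal_mul (Real.exp_pos _).le,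
    ← lintegral_exp_mul_re_gaussMeasure hs k, ← lintegral_const_mul' _ _ ENNReal.ofReal_ne_top]
  congr! 2 with z
  rw [← ENNReal.ofReal_mul (Real.exp_pos _).le, ← Real.exp_add]
  congr 2
  simp only [add_re, re_ofReal_mul]
  norm_cast
  ring

end Coordinate

lemma eq_of_forall_exp_mul_le {a b K : ℝ} (h : ∀ q : ℝ, rexp (q * a) ≤ K * rexp (q * b)) :
    a = b := by
  by_contra hab
  have hq := h (Real.log (|K| + 1) / (a - b))
  rw [show Real.log (|K| + 1) / (a - b) * a =
      Real.log (|K| + 1) + Real.log (|K| + 1) / (a - b) * b by field_simp [sub_ne_zero.2 hab]; ring,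
    Real.exp_add, Real.exp_log (by positivity)] at hq
  nlinarith [le_abs_self K, Real.exp_pos (Real.log (|K| + 1) / (a - b) * b)]

theorem stmt5 (n : ℕ) (hn : 0 < n) (t s : ℝ) (ht : 0 < t) (hs : 0 < s)
    (h : ∃ C : ℝ, 0 ≤ C ∧
      ∀ f : (Fin n → ℂ) → ℂ, MemLp f 1 (gaussMeasure n s) →
        (∀ᵐ z ∂(volume : Measure (Fin n → ℂ)),
          Integrable (fun w => Complex.exp ((t : ℂ) * herm z w) * f w) (gaussMeasure n t)) ∧
        ∫⁻ z, ENNReal.ofReal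
            ‖∫ w, Complex.exp ((t : ℂ) * herm z w) * f w ∂(gaussMeasure n t)‖
          ∂(gaussMeasure n s)
          ≤ ENNReal.ofReal C *
            ∫⁻ z, ENNReal.ofReal ‖f z‖ ∂(gaussMeasure n s)) :
    t = 2 * s := by
  obtain ⟨C, hC, hbound⟩ := h
  let k : Fin n := ⟨0, hn⟩
  have hexp_le (q : ℝ) : rexp (q * t⁻¹) ≤ C * rexp ((4 * s)⁻¹) * rexp (q * (2 * s)⁻¹) := by
    have hf := memLp_one_iff_integrable.2 (integrable_cexp_coord_gaussMeasure hs k q (1 : ℝ))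
    have hle := (hbound _ hf).2
    rw [lintegral_norm_integral_cexp_herm_mul_cexp_coord ht hs,
      lintegral_norm_cexp_coord_gaussMeasure hs, ← ENNReal.ofReal_mul hC,
      ENNReal.ofReal_le_ofReal_iff (by positivity)] at hle
    refine le_of_mul_le_mul_right ?_ (Real.exp_pos (q ^ 2 / (4 * s)))
    calc rexp (q * t⁻¹) * rexp (q ^ 2 / (4 * s)) = rexp (q * 1 / t + q ^ 2 / (4 * s)) := by
          rw [← Real.exp_add]; ring_nf
      _ ≤ C * rexp ((q + 1) ^ 2 / (4 * s)) := hle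
      _ = C * rexp ((4 * s)⁻¹) * rexp (q * (2 * s)⁻¹) * rexp (q ^ 2 / (4 * s)) := by
          rw [mul_assoc, mul_assoc, ← Real.exp_add, ← Real.exp_add]; ring_nf
  exact inv_injective (eq_of_forall_exp_mul_le hexp_le)
end

section
/- Let 1 < p ≤ 2, t > 0, s > 0, and suppose there exists C ≥ 0 such that for every f ∈ L^p(ℂⁿ, dv_s) the function w ↦ e^{t⟨z,w⟩} f(w) is dv_t-integrable for a.e. z ∈ ℂⁿ and ∫_{ℂⁿ} |S_t f|^p dv_s ≤ C^p ∫_{ℂⁿ} |f|^p dv_s, where S_t f(z) = ∫_{ℂⁿ} e^{t⟨z,w⟩} f(w) dv_t(w). Then p·t = 2s. -/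
open MeasureTheory

/-- Boundedness of the operator `S_t f(z) = ∫ e^{t⟨z,w⟩} f(w) dv_t(w)` on `L^p(ℂⁿ, dv_s)`
with constant `C`: for every `f ∈ L^p(dv_s)` the integrand is `dv_t`-integrable for a.e. `z`
and `∫ |S_t f|^p dv_s ≤ C^p ∫ |f|^p dv_s`. -/
def SBounded (n : ℕ) (t s p C : ℝ) : Prop :=
  ∀ f : (Fin n → ℂ) → ℂ, MemLp f (ENNReal.ofReal p) (gaussMeasure n s) →
    (∀ᵐ z ∂(volume : Measure (Fin n → ℂ)),
      Integrable (fun w => Complex.exp ((t : ℂ) * herm z w) * f w) (gaussMeasure n t)) ∧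
    ∫⁻ z, ENNReal.ofReal
        (‖∫ w, Complex.exp ((t : ℂ) * herm z w) * f w ∂(gaussMeasure n t)‖ ^ p)
      ∂(gaussMeasure n s)
      ≤ ENNReal.ofReal (C ^ p) *
        ∫⁻ z, ENNReal.ofReal (‖f z‖ ^ p) ∂(gaussMeasure n s)

/-!
Test the bound on `f(w) = e^{x|w|² + ⟨w,a⟩}`, which lies in `L^p(dv_s)` when `px < s`. For `x < t`,
completing the square in the Gaussian integral gives `S_t f(z) = θⁿ e^{θ⟨z,a⟩}` with
`θ = t/(t-x)`, and both sides of the inequality are again Gaussian integrals: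
`θ^{np} e^{θ²p²|a|²/4s} ≤ Cᵖ (s/(s-px))ⁿ e^{p²|a|²/4(s-px)}`. Letting `|a| → ∞` gives
`t²(s-px) ≤ s(t-x)²`, and for `x = t(2s-pt)/(2s)` this reads `s x² ≤ 0`, so `x = 0`, i.e. `pt = 2s`.
-/

open Real Complex ComplexConjugate

lemma herm_smul_left {n : ℕ} (c : ℂ) (z w : Fin n → ℂ) : herm (c • z) w = c * herm z w := by
  simp only [herm, Pi.smul_apply, smul_eq_mul, Finset.mul_sum, mul_assoc]

lemma herm_smul_right {n : ℕ} (c : ℂ) (z w : Fin n → ℂ) : herm z (c • w) = conj c * herm z w := by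
  simp only [herm, Pi.smul_apply, smul_eq_mul, map_mul, Finset.mul_sum, mul_left_comm]

lemma conj_herm {n : ℕ} (z w : Fin n → ℂ) : conj (herm z w) = herm w z := by
  simp only [herm, map_sum, map_mul, conj_conj, mul_comm]

lemma herm_self {n : ℕ} (z : Fin n → ℂ) : herm z z = nsq z := by
  simp only [herm, nsq, mul_conj, ofReal_sum]

@[fun_prop]
lemma continuous_nsq {n : ℕ} : Continuous (nsq (n := n)) := by
  unfold nsq; fun_prop

@[fun_prop]
lemma continuous_herm_left {n : ℕ} (a : Fin n → ℂ) : Continuous fun z : Fin n → ℂ => herm z a := by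
  unfold herm; fun_prop

lemma cexp_conj_mul_add_mul_sub_normSq_comp_symm (α β c : ℂ) :
    (fun w : ℂ => cexp (α * conj w + β * w - c * normSq w)) ∘ measurableEquivRealProd.symm
      = fun q : ℝ × ℝ => cexp (-c * (q.1 : ℂ) ^ 2 + (α + β) * q.1 + 0)
        * cexp (-c * (q.2 : ℂ) ^ 2 + (β - α) * I * q.2 + 0) := by
  ext q
  rw [Function.comp_apply, ← Complex.exp_add]
  congr 1
  simp only [measurableEquivRealProd_symm_apply, mk_eq_add_mul_I, normSq_add_mul_I, map_add,
    map_mul, conj_ofReal, conj_I]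
  push_cast
  ring

lemma integrable_cexp_conj_mul_add_mul_sub_normSq {c : ℂ} (hc : 0 < c.re) (α β : ℂ) :
    Integrable fun w : ℂ => cexp (α * conj w + β * w - c * normSq w) := by
  rw [← (volume_preserving_equiv_real_prod.symm).integrable_comp_emb
    measurableEquivRealProd.symm.measurableEmbedding,
    cexp_conj_mul_add_mul_sub_normSq_comp_symm, Measure.volume_eq_prod]
  exact (integrable_cexp_quadratic hc _ _).mul_prod (integrable_cexp_quadratic hc _ _)

lemma integral_cexp_conj_mul_add_mul_sub_normSq {c : ℂ} (hc : 0 < c.re) (α β : ℂ) :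
    ∫ w : ℂ, cexp (α * conj w + β * w - c * normSq w) = π / c * cexp (α * β / c) := by
  have hc₀ : c ≠ 0 := fun h => by simp [h] at hc
  have hπc : (π / c : ℂ) ≠ 0 := div_ne_zero (ofReal_ne_zero.mpr pi_ne_zero) hc₀
  have hnc : (-c).re < 0 := by simpa using hc
  rw [← (volume_preserving_equiv_real_prod.symm).integral_comp
    measurableEquivRealProd.symm.measurableEmbedding]
  simp only [← Function.comp_apply (f := fun w : ℂ => cexp (α * conj w + β * w - c * normSq w)),
    cexp_conj_mul_add_mul_sub_normSq_comp_symm]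
  rw [Measure.volume_eq_prod,
    integral_prod_mul (fun u : ℝ => cexp (-c * (u : ℂ) ^ 2 + (α + β) * u + 0))
      (fun v : ℝ => cexp (-c * (v : ℂ) ^ 2 + (β - α) * I * v + 0)),
    integral_cexp_quadratic hnc, integral_cexp_quadratic hnc, neg_neg]
  calc (π / c : ℂ) ^ (1 / 2 : ℂ) * cexp (0 - (α + β) ^ 2 / (4 * -c))
        * ((π / c : ℂ) ^ (1 / 2 : ℂ) * cexp (0 - ((β - α) * I) ^ 2 / (4 * -c)))
      = (π / c : ℂ) ^ (1 / 2 + 1 / 2 : ℂ)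
        * cexp ((0 - (α + β) ^ 2 / (4 * -c)) + (0 - ((β - α) * I) ^ 2 / (4 * -c))) := by
        rw [cpow_add _ _ hπc, Complex.exp_add]; ring
    _ = π / c * cexp (α * β / c) := by
        congr 1
        · norm_num
        · congr 1
          rw [mul_pow, I_sq]
          field_simp
          ring

lemma cexp_herm_add_herm_sub_nsq_eq_prod {n : ℕ} (a b : Fin n → ℂ) (c : ℂ) (w : Fin n → ℂ) :
    cexp (herm a w + herm w b - c * nsq w)
      = ∏ i, cexp (a i * conj (w i) + conj (b i) * w i - c * normSq (w i)) := by
  rw [← Complex.exp_sum]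
  simp only [herm, nsq, ofReal_sum, Finset.mul_sum, ← Finset.sum_add_distrib,
    ← Finset.sum_sub_distrib, mul_comm (w _)]

lemma integrable_cexp_herm_add_herm_sub_nsq {n : ℕ} {c : ℂ} (hc : 0 < c.re) (a b : Fin n → ℂ) :
    Integrable fun w : Fin n → ℂ => cexp (herm a w + herm w b - c * nsq w) := by
  simp only [cexp_herm_add_herm_sub_nsq_eq_prod]
  exact Integrable.fintype_prod fun i => integrable_cexp_conj_mul_add_mul_sub_normSq hc _ _

lemma integral_cexp_herm_add_herm_sub_nsq {n : ℕ} {c : ℂ} (hc : 0 < c.re) (a b : Fin n → ℂ) :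
    ∫ w : Fin n → ℂ, cexp (herm a w + herm w b - c * nsq w)
      = (π / c) ^ n * cexp (herm a b / c) := by
  simp only [cexp_herm_add_herm_sub_nsq_eq_prod]
  rw [integral_fintype_prod_volume_eq_prod
    (fun i (w : ℂ) => cexp (a i * conj w + conj (b i) * w - c * normSq w))]
  simp only [integral_cexp_conj_mul_add_mul_sub_normSq hc, Finset.prod_mul_distrib,
    Finset.prod_const, Finset.card_univ, Fintype.card_fin, ← Complex.exp_sum, herm,
    Finset.sum_div]

lemma re_herm_sub_nsq_eq {n : ℕ} (r m : ℝ) (a w : Fin n → ℂ) :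
    ((r * (herm w a).re - m * nsq w : ℝ) : ℂ)
      = herm (((r / 2 : ℝ) : ℂ) • a) w + herm w (((r / 2 : ℝ) : ℂ) • a) - m * nsq w := by
  rw [herm_smul_left, herm_smul_right, conj_ofReal, ← conj_herm w a, ← mul_add, add_comm,
    add_conj]
  push_cast
  ring

lemma integrable_rexp_re_herm_sub_nsq {n : ℕ} {m : ℝ} (hm : 0 < m) (r : ℝ) (a : Fin n → ℂ) :
    Integrable fun w : Fin n → ℂ => rexp (r * (herm w a).re - m * nsq w) := by
  have h := (integrable_cexp_herm_add_herm_sub_nsq (c := m) (by simpa using hm)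
    (((r / 2 : ℝ) : ℂ) • a) (((r / 2 : ℝ) : ℂ) • a)).re
  simp only [← re_herm_sub_nsq_eq, ← ofReal_exp] at h
  exact h

lemma integral_rexp_re_herm_sub_nsq {n : ℕ} {m : ℝ} (hm : 0 < m) (r : ℝ) (a : Fin n → ℂ) :
    ∫ w : Fin n → ℂ, rexp (r * (herm w a).re - m * nsq w)
      = (π / m) ^ n * rexp (r ^ 2 * nsq a / (4 * m)) := by
  apply ofReal_injective
  rw [← integral_complex_ofReal]
  simp only [ofReal_exp, re_herm_sub_nsq_eq]
  rw [integral_cexp_herm_add_herm_sub_nsq (by simpa using hm), herm_smul_left, herm_smul_right,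
    herm_self]
  push_cast
  congr 2
  simp only [conj_ofReal, map_div₀, map_ofNat]
  ring

lemma measurable_gaussDensity (n : ℕ) (τ : ℝ) :
    Measurable fun z : Fin n → ℂ => (τ / π) ^ n * rexp (-τ * nsq z) := by
  fun_prop

lemma integral_gaussMeasure_s6 {E : Type*} [NormedAddCommGroup E] [NormedSpace ℝ E] {n : ℕ} {τ : ℝ}
    (hτ : 0 ≤ τ) (F : (Fin n → ℂ) → E) :
    ∫ w, F w ∂gaussMeasure n τ = ∫ w, ((τ / π) ^ n * rexp (-τ * nsq w)) • F w := by
  rw [gaussMeasure, integral_withDensity_eq_integral_toReal_smul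
    (measurable_gaussDensity n τ).ennreal_ofReal (ae_of_all _ fun _ => ENNReal.ofReal_lt_top)]
  congr 1 with w
  rw [ENNReal.toReal_ofReal (by positivity)]

lemma lintegral_gaussMeasure_ofReal_rexp {n : ℕ} {s c : ℝ} (hs : 0 ≤ s) (hcs : c < s) (r : ℝ)
    (a : Fin n → ℂ) :
    ∫⁻ z, ENNReal.ofReal (rexp (r * (herm z a).re + c * nsq z)) ∂gaussMeasure n s
      = ENNReal.ofReal ((s / (s - c)) ^ n * rexp (r ^ 2 * nsq a / (4 * (s - c)))) := by
  have hsc : 0 < s - c := sub_pos.mpr hcs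
  have hdens (z : Fin n → ℂ) : ENNReal.ofReal ((s / π) ^ n * rexp (-s * nsq z))
        * ENNReal.ofReal (rexp (r * (herm z a).re + c * nsq z))
      = ENNReal.ofReal ((s / π) ^ n * rexp (r * (herm z a).re - (s - c) * nsq z)) := by
    rw [← ENNReal.ofReal_mul (by positivity), mul_assoc, ← Real.exp_add]
    ring_nf
  rw [gaussMeasure, lintegral_withDensity_eq_lintegral_mul₀
    (measurable_gaussDensity n s).ennreal_ofReal.aemeasurable (by fun_prop)]
  simp only [Pi.mul_apply, hdens]
  rw [← ofReal_integral_eq_lintegral_ofReal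
    ((integrable_rexp_re_herm_sub_nsq hsc r a).const_mul _) (ae_of_all _ fun _ => by positivity),
    integral_const_mul, integral_rexp_re_herm_sub_nsq hsc, ← mul_assoc, ← mul_pow]
  congr 3
  field_simp

noncomputable def quadExp {n : ℕ} (x : ℝ) (a : Fin n → ℂ) (w : Fin n → ℂ) : ℂ :=
  cexp (x * nsq w + herm w a)

@[fun_prop]
lemma continuous_quadExp {n : ℕ} (x : ℝ) (a : Fin n → ℂ) : Continuous (quadExp x a) := by
  unfold quadExp; fun_prop

lemma norm_quadExp_rpow {n : ℕ} (x p : ℝ) (a z : Fin n → ℂ) :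
    ‖quadExp x a z‖ ^ p = rexp (p * (herm z a).re + p * x * nsq z) := by
  rw [quadExp, norm_exp, ← Real.exp_mul]
  simp only [add_re, re_ofReal_mul, ofReal_re]
  ring_nf

lemma lintegral_norm_quadExp_rpow {n : ℕ} {x p s : ℝ} (hs : 0 ≤ s) (hpx : p * x < s)
    (a : Fin n → ℂ) :
    ∫⁻ z, ENNReal.ofReal (‖quadExp x a z‖ ^ p) ∂gaussMeasure n s
      = ENNReal.ofReal ((s / (s - p * x)) ^ n * rexp (p ^ 2 * nsq a / (4 * (s - p * x)))) := by
  simp only [norm_quadExp_rpow]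
  exact lintegral_gaussMeasure_ofReal_rexp hs hpx p a

lemma memLp_quadExp {n : ℕ} {x p s : ℝ} (hp : 0 < p) (hs : 0 ≤ s) (hpx : p * x < s)
    (a : Fin n → ℂ) : MemLp (quadExp x a) (ENNReal.ofReal p) (gaussMeasure n s) := by
  refine ⟨(continuous_quadExp x a).aestronglyMeasurable, ?_⟩
  rw [eLpNorm_eq_lintegral_rpow_enorm_toReal (by simpa using hp) ENNReal.ofReal_ne_top,
    ENNReal.toReal_ofReal hp.le]
  simp only [← ofReal_norm, ENNReal.ofReal_rpow_of_nonneg (norm_nonneg _) hp.le,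
    lintegral_norm_quadExp_rpow hs hpx]
  exact ENNReal.rpow_lt_top_of_nonneg (by positivity) ENNReal.ofReal_ne_top

lemma integral_cexp_herm_mul_quadExp {n : ℕ} {t x : ℝ} (ht : 0 ≤ t) (hxt : x < t)
    (a z : Fin n → ℂ) :
    ∫ w, cexp (t * herm z w) * quadExp x a w ∂gaussMeasure n t
      = ((t / (t - x) : ℝ) : ℂ) ^ n * cexp (((t / (t - x) : ℝ) : ℂ) * herm z a) := by
  have htx : 0 < t - x := sub_pos.mpr hxt
  have hexp (w : Fin n → ℂ) :
      ((t / π) ^ n * rexp (-t * nsq w)) • (cexp (t * herm z w) * quadExp x a w)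
        = ((t / π : ℝ) : ℂ) ^ n
          * cexp (herm ((t : ℂ) • z) w + herm w a - ((t - x : ℝ) : ℂ) * nsq w) := by
    rw [quadExp, real_smul, ofReal_mul, ofReal_exp, mul_assoc, ← Complex.exp_add,
      ← Complex.exp_add, herm_smul_left]
    push_cast
    ring_nf
  simp only [integral_gaussMeasure_s6 ht, hexp]
  rw [integral_const_mul, integral_cexp_herm_add_herm_sub_nsq (by simpa using htx),
    herm_smul_left, ← mul_assoc, ← mul_pow]
  have htx' : ((t - x : ℝ) : ℂ) ≠ 0 := ofReal_ne_zero.mpr htx.ne'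
  have hπ : (π : ℂ) ≠ 0 := ofReal_ne_zero.mpr pi_ne_zero
  push_cast at htx' ⊢
  congr 2 <;> field_simp

lemma norm_ofReal_pow_mul_cexp_rpow {n : ℕ} {θ : ℝ} (hθ : 0 ≤ θ) (p : ℝ) (a z : Fin n → ℂ) :
    ‖(θ : ℂ) ^ n * cexp (θ * herm z a)‖ ^ p
      = (θ ^ n) ^ p * rexp (θ * p * (herm z a).re) := by
  rw [norm_mul, norm_pow, norm_real, Real.norm_of_nonneg hθ, norm_exp, re_ofReal_mul,
    Real.mul_rpow (by positivity) (Real.exp_pos _).le, ← Real.exp_mul]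
  ring_nf

lemma SBounded.rpow_mul_rexp_le {n : ℕ} {t s p C x : ℝ} (hSB : SBounded n t s p C) (hp : 0 < p)
    (ht : 0 ≤ t) (hs : 0 < s) (hC : 0 ≤ C) (hxt : x < t) (hpx : p * x < s) (a : Fin n → ℂ) :
    ((t / (t - x)) ^ n) ^ p * rexp ((t / (t - x) * p) ^ 2 * nsq a / (4 * s))
      ≤ C ^ p * ((s / (s - p * x)) ^ n * rexp (p ^ 2 * nsq a / (4 * (s - p * x)))) := by
  have hθ : 0 ≤ t / (t - x) := div_nonneg ht (sub_pos.mpr hxt).le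
  have hlhs := lintegral_gaussMeasure_ofReal_rexp (c := 0) hs.le hs (t / (t - x) * p) a
  simp only [zero_mul, add_zero, sub_zero, div_self hs.ne', one_pow, one_mul] at hlhs
  obtain ⟨-, hbound⟩ := hSB _ (memLp_quadExp hp hs.le hpx a)
  simp only [integral_cexp_herm_mul_quadExp ht hxt, norm_ofReal_pow_mul_cexp_rpow hθ,
    ENNReal.ofReal_mul (by positivity : (0 : ℝ) ≤ ((t / (t - x)) ^ n) ^ p)] at hbound
  rwa [lintegral_const_mul' _ _ ENNReal.ofReal_ne_top, hlhs, lintegral_norm_quadExp_rpow hs.le hpx,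
    ← ENNReal.ofReal_mul (by positivity), ← ENNReal.ofReal_mul (by positivity),
    ENNReal.ofReal_le_ofReal_iff (by positivity)] at hbound

lemma le_of_mul_rexp_le_mul_rexp {K₁ K₂ u v : ℝ} (hK₁ : 0 < K₁)
    (h : ∀ R, 0 ≤ R → K₁ * rexp (u * R) ≤ K₂ * rexp (v * R)) : u ≤ v := by
  by_contra! hvu
  have huv : 0 < u - v := sub_pos.mpr hvu
  have hK : K₁ ≤ K₂ := by simpa using h 0 le_rfl
  set R := K₂ / (K₁ * (u - v))
  have hR : 0 ≤ R := div_nonneg (by linarith) (by positivity)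
  have hlin : K₁ * (1 + (u - v) * R) ≤ K₂ := by
    refine le_of_mul_le_mul_right ?_ (Real.exp_pos (v * R))
    calc K₁ * (1 + (u - v) * R) * rexp (v * R)
        ≤ K₁ * rexp ((u - v) * R) * rexp (v * R) := by
          gcongr
          linarith [Real.add_one_le_exp ((u - v) * R)]
      _ = K₁ * rexp (u * R) := by rw [mul_assoc, ← Real.exp_add]; ring_nf
      _ ≤ K₂ * rexp (v * R) := h R hR
  have hKR : K₁ * ((u - v) * R) = K₂ := by simp only [R]; field_simp
  linarith

lemma nsq_const {n : ℕ} (c : ℂ) : nsq (fun _ : Fin n => c) = n * normSq c := by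
  simp [nsq]

lemma SBounded.sq_mul_le {n : ℕ} {t s p C x : ℝ} (hSB : SBounded n t s p C) (hn : 0 < n)
    (hp : 0 < p) (ht : 0 < t) (hs : 0 < s) (hC : 0 ≤ C) (hxt : x < t) (hpx : p * x < s) :
    t ^ 2 * (s - p * x) ≤ s * (t - x) ^ 2 := by
  have htx : 0 < t - x := sub_pos.mpr hxt
  have hspx : 0 < s - p * x := sub_pos.mpr hpx
  have hn' : (0 : ℝ) < n := Nat.cast_pos.mpr hn
  have hgrowth : (t / (t - x) * p) ^ 2 / (4 * s) ≤ p ^ 2 / (4 * (s - p * x)) := by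
    refine le_of_mul_rexp_le_mul_rexp (K₁ := ((t / (t - x)) ^ n) ^ p)
      (K₂ := C ^ p * (s / (s - p * x)) ^ n) (by positivity) fun R hR => ?_
    have hnsq : nsq (fun _ : Fin n => ((√(R / n) : ℝ) : ℂ)) = R := by
      rw [nsq_const, normSq_ofReal, Real.mul_self_sqrt (by positivity)]
      field_simp
    have := hSB.rpow_mul_rexp_le hp ht.le hs hC hxt hpx fun _ => ((√(R / n) : ℝ) : ℂ)
    rw [hnsq] at this
    simpa only [div_mul_eq_mul_div, mul_assoc] using this
  rw [div_le_div_iff₀ (by positivity) (by positivity), mul_pow, div_pow, div_mul_eq_mul_div,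
    div_mul_eq_mul_div, div_le_iff₀ (by positivity)] at hgrowth
  refine le_of_mul_le_mul_left ?_ (by positivity : (0 : ℝ) < 4 * p ^ 2)
  linarith

theorem stmt6_general (n : ℕ) (hn : 0 < n) (p t s : ℝ) (hp1 : 1 < p)
    (ht : 0 < t) (hs : 0 < s)
    (h : ∃ C : ℝ, 0 ≤ C ∧ SBounded n t s p C) :
    p * t = 2 * s := by
  obtain ⟨C, hC, hSB⟩ := h
  have hp : 0 < p := by linarith
  -- `s(t-x)² - t²(s-px) = x(sx - t(2s-pt))` is negative between its roots unless they coincide;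
  -- `x` is their midpoint.
  set x := t * (2 * s - p * t) / (2 * s) with hx
  have hx2s : 2 * s * x = t * (2 * s - p * t) := by rw [hx]; field_simp
  have hxt : x < t := by nlinarith [mul_pos (mul_pos hp ht) ht]
  have hpx : p * x < s := by nlinarith [sq_nonneg (s - p * t), mul_pos hs hs]
  have hsq := hSB.sq_mul_le hn hp ht hs hC hxt hpx
  have hx0 : x = 0 := by
    have : s * x ^ 2 ≤ 0 := by linear_combination hsq + x * hx2s
    exact pow_eq_zero_iff two_ne_zero |>.mp
      (le_antisymm (nonpos_of_mul_nonpos_right this hs) (sq_nonneg x))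
  have hprod : t * (2 * s - p * t) = 0 := by rw [← hx2s, hx0, mul_zero]
  linarith [(mul_eq_zero.mp hprod).resolve_left ht.ne']

theorem stmt6 (n : ℕ) (hn : 0 < n) (p t s : ℝ) (hp1 : 1 < p) (hp2 : p ≤ 2)
    (ht : 0 < t) (hs : 0 < s)
    (h : ∃ C : ℝ, 0 ≤ C ∧ SBounded n t s p C) :
    p * t = 2 * s :=
  stmt6_general n hn p t s hp1 ht hs h
end
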